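/- arXiv:1610.02725 — 4 statements merged into one kernel-verified Lean document; each statement's English description precedes it below -/
import Mathlib

section
/- Let m = N·v and let vectors in ℝ^m be partitioned into N blocks of size v. Let A be a symmetric positive semidefinite m×m real matrix, let τ > 0 and λ > 0, let B ∈ ℝ^m, and suppose every eigenvalue of I − τ²A has absolute value at most ξ, where 0 ≤ ξ < 1. Define the EM iteration map F : ℝ^m → ℝ^m by F(β) = S_{λτ²}((I − τ²A)β + τ²B), where S_{λτ²} acts blockwise by sending the block r_d to [1 − λτ²/‖r_d‖₂]₊ · r_d (and to 0 when r_d = 0). Then F is a contraction with Lipschitz constant ξ: for all β₁, β₂ ∈ ℝ^m, ‖F(β₁) − F(β₂)‖₂ ≤ ξ‖β₁ − β₂‖₂. -/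
/-!
The map `F` is blockwise soft-thresholding composed with the affine map
`β ↦ (I - τ²A)β + τ²B`. The affine map is `ξ`-Lipschitz: in an orthonormal eigenbasis of the
symmetric matrix `I - τ²A` every coordinate is scaled by an eigenvalue of modulus at most `ξ`.
Soft-thresholding is non-expansive: on a block it is `x ↦ t x` with `t ∈ [0, 1]` and
`t ‖x‖ = [‖x‖ - c]₊`, and
`‖t x - s y‖² = (t‖x‖ - s‖y‖)² + 2ts (‖x‖‖y‖ - ⟪x, y⟫)`
`            ≤ (‖x‖ - ‖y‖)² + 2 (‖x‖‖y‖ - ⟪x, y⟫) = ‖x - y‖²`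
since `x ↦ [x - c]₊` is 1-Lipschitz, `ts ≤ 1` and Cauchy–Schwarz.
-/

open scoped BigOperators

/-- Euclidean norm of the `d`-th block (of size `v`) of a vector in `ℝ^(N·v)`. -/
noncomputable def blockNorm {N v : ℕ} (r : Fin N × Fin v → ℝ) (d : Fin N) : ℝ :=
  Real.sqrt (∑ j, r (d, j) ^ 2)

/-- Blockwise group soft-thresholding with threshold `c`:
the `d`-th block `r_d` is mapped to `[1 - c/‖r_d‖₂]₊ • r_d`. -/
noncomputable def softThresh {N v : ℕ} (c : ℝ) (r : Fin N × Fin v → ℝ) :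
    Fin N × Fin v → ℝ :=
  fun p => (if blockNorm r p.1 ≤ c then 0 else 1 - c / blockNorm r p.1) * r p

open Matrix Module.End

theorem EuclideanSpace.norm_toLp_eq_sqrt_sum_sq {ι : Type*} [Fintype ι] (r : ι → ℝ) :
    ‖(WithLp.toLp 2 r : EuclideanSpace ℝ ι)‖ = √(∑ i, r i ^ 2) := by
  rw [← EuclideanSpace.real_norm_sq_eq, Real.sqrt_sq (norm_nonneg _)]

theorem LinearMap.IsSymmetric.norm_apply_le_of_forall_hasEigenvalue {𝕜 E : Type*} [RCLike 𝕜]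
    [NormedAddCommGroup E] [InnerProductSpace 𝕜 E] [FiniteDimensional 𝕜 E]
    {T : E →ₗ[𝕜] E} (hT : T.IsSymmetric) {ξ : ℝ} (hξ : 0 ≤ ξ)
    (h : ∀ μ : ℝ, HasEigenvalue T (μ : 𝕜) → |μ| ≤ ξ) (x : E) : ‖T x‖ ≤ ξ * ‖x‖ := by
  set b := hT.eigenvectorBasis rfl
  have hcoord : ∀ i, ‖b.repr (T x) i‖ ^ 2 ≤ ξ ^ 2 * ‖b.repr x i‖ ^ 2 := fun i => by
    rw [hT.eigenvectorBasis_apply_self_apply, norm_mul, RCLike.norm_ofReal, mul_pow]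
    gcongr
    exact h _ (hT.hasEigenvalue_eigenvalues rfl i)
  rw [← sq_le_sq₀ (norm_nonneg _) (by positivity), mul_pow, ← b.repr.norm_map, ← b.repr.norm_map x,
    EuclideanSpace.norm_sq_eq, EuclideanSpace.norm_sq_eq, Finset.mul_sum]
  exact Finset.sum_le_sum fun i _ => hcoord i

theorem Matrix.sqrt_sum_sq_mulVec_le {ι : Type*} [Fintype ι] [DecidableEq ι]
    {M : Matrix ι ι ℝ} (hM : M.IsSymm) {ξ : ℝ} (hξ : 0 ≤ ξ)
    (h : ∀ (μ : ℝ) (x : ι → ℝ), x ≠ 0 → M *ᵥ x = μ • x → |μ| ≤ ξ) (w : ι → ℝ) :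
    √(∑ i, (M *ᵥ w) i ^ 2) ≤ ξ * √(∑ i, w i ^ 2) := by
  have hT : M.toEuclideanLin.IsSymmetric :=
    isSymmetric_toEuclideanLin_iff.mpr (isHermitian_iff_isSymm.mpr hM)
  have heig : ∀ μ : ℝ, HasEigenvalue M.toEuclideanLin μ → |μ| ≤ ξ := fun μ hμ => by
    obtain ⟨x, hx, hx0⟩ := hμ.exists_hasEigenvector
    refine h μ x.ofLp (by simpa using hx0) ?_
    simpa [toLpLin_apply] using congrArg WithLp.ofLp (mem_eigenspace_iff.mp hx)
  have := hT.norm_apply_le_of_forall_hasEigenvalue hξ heig (WithLp.toLp 2 w)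
  rwa [toLpLin_apply, EuclideanSpace.norm_toLp_eq_sqrt_sum_sq,
    EuclideanSpace.norm_toLp_eq_sqrt_sum_sq] at this

noncomputable def shrinkFactor (c r : ℝ) : ℝ := if r ≤ c then 0 else 1 - c / r

theorem shrinkFactor_nonneg {c : ℝ} (hc : 0 ≤ c) (r : ℝ) : 0 ≤ shrinkFactor c r := by
  unfold shrinkFactor
  split_ifs with h
  · rfl
  · rw [sub_nonneg, div_le_one (hc.trans_lt (not_le.mp h))]
    exact (not_le.mp h).le

theorem shrinkFactor_le_one {c : ℝ} (hc : 0 ≤ c) (r : ℝ) : shrinkFactor c r ≤ 1 := by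
  unfold shrinkFactor
  split_ifs with h
  · exact zero_le_one
  · exact sub_le_self _ (div_nonneg hc (hc.trans (not_le.mp h).le))

theorem shrinkFactor_mul_self {c : ℝ} (hc : 0 ≤ c) (r : ℝ) :
    shrinkFactor c r * r = max (r - c) 0 := by
  unfold shrinkFactor
  split_ifs with h
  · simp [h]
  · have hr : r ≠ 0 := (hc.trans_lt (not_le.mp h)).ne'
    rw [max_eq_left (by linarith [not_le.mp h]), sub_mul, div_mul_cancel₀ c hr, one_mul]

theorem norm_smul_sub_smul_le_norm_sub {E : Type*} [NormedAddCommGroup E] [InnerProductSpace ℝ E]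
    {t s : ℝ} {x y : E} (hts : t * s ≤ 1)
    (h : |t * ‖x‖ - s * ‖y‖| ≤ |‖x‖ - ‖y‖|) : ‖t • x - s • y‖ ≤ ‖x - y‖ := by
  have hgap : 0 ≤ ‖x‖ * ‖y‖ - inner ℝ x y := sub_nonneg.mpr (real_inner_le_norm x y)
  have hsq := sq_le_sq.mpr h
  rw [← sq_le_sq₀ (norm_nonneg _) (norm_nonneg _), norm_sub_sq_real, norm_sub_sq_real,
    norm_smul, norm_smul, real_inner_smul_left, real_inner_smul_right, Real.norm_eq_abs,
    Real.norm_eq_abs]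
  nlinarith [mul_le_mul_of_nonneg_right hts hgap, sq_abs t, sq_abs s]

theorem norm_shrinkFactor_smul_sub_le {E : Type*} [NormedAddCommGroup E] [InnerProductSpace ℝ E]
    {c : ℝ} (hc : 0 ≤ c) (x y : E) :
    ‖shrinkFactor c ‖x‖ • x - shrinkFactor c ‖y‖ • y‖ ≤ ‖x - y‖ := by
  refine norm_smul_sub_smul_le_norm_sub
    (mul_le_one₀ (shrinkFactor_le_one hc _) (shrinkFactor_nonneg hc _) (shrinkFactor_le_one hc _))
    ?_
  rw [shrinkFactor_mul_self hc, shrinkFactor_mul_self hc]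
  simpa using abs_max_sub_max_le_abs (‖x‖ - c) (‖y‖ - c) 0

theorem softThresh_apply {N v : ℕ} (c : ℝ) (r : Fin N × Fin v → ℝ) (p : Fin N × Fin v) :
    softThresh c r p = shrinkFactor c (blockNorm r p.1) * r p :=
  rfl

theorem sum_sq_softThresh_sub_le {N v : ℕ} {c : ℝ} (hc : 0 ≤ c) (r s : Fin N × Fin v → ℝ) :
    ∑ p, (softThresh c r p - softThresh c s p) ^ 2 ≤ ∑ p, (r p - s p) ^ 2 := by
  rw [Fintype.sum_prod_type, Fintype.sum_prod_type]
  refine Finset.sum_le_sum fun d _ => ?_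
  let x : EuclideanSpace ℝ (Fin v) := WithLp.toLp 2 fun j => r (d, j)
  let y : EuclideanSpace ℝ (Fin v) := WithLp.toLp 2 fun j => s (d, j)
  have hx : blockNorm r d = ‖x‖ := (EuclideanSpace.norm_toLp_eq_sqrt_sum_sq _).symm
  have hy : blockNorm s d = ‖y‖ := (EuclideanSpace.norm_toLp_eq_sqrt_sum_sq _).symm
  have := norm_shrinkFactor_smul_sub_le hc x y
  rw [← sq_le_sq₀ (norm_nonneg _) (norm_nonneg _), EuclideanSpace.real_norm_sq_eq,
    EuclideanSpace.real_norm_sq_eq] at this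
  simpa [softThresh_apply, hx, hy, x, y] using this

theorem slants_EM_contraction_general {N v : ℕ}
    (A : Matrix (Fin N × Fin v) (Fin N × Fin v) ℝ)
    (hAsymm : A.IsSymm)
    (τ lam ξ : ℝ) (hlam : 0 < lam) (hξ0 : 0 ≤ ξ)
    (B : Fin N × Fin v → ℝ)
    (heig : ∀ (μ : ℝ) (x : Fin N × Fin v → ℝ), x ≠ 0 →
      ((1 : Matrix (Fin N × Fin v) (Fin N × Fin v) ℝ) - τ ^ 2 • A).mulVec x = μ • x →
      |μ| ≤ ξ)
    (F : (Fin N × Fin v → ℝ) → (Fin N × Fin v → ℝ))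
    (hF : ∀ β, F β = softThresh (lam * τ ^ 2)
      (((1 : Matrix (Fin N × Fin v) (Fin N × Fin v) ℝ) - τ ^ 2 • A).mulVec β + τ ^ 2 • B)) :
    ∀ β₁ β₂ : Fin N × Fin v → ℝ,
      Real.sqrt (∑ p, (F β₁ p - F β₂ p) ^ 2) ≤ ξ * Real.sqrt (∑ p, (β₁ p - β₂ p) ^ 2) := by
  intro β₁ β₂
  set M := (1 : Matrix (Fin N × Fin v) (Fin N × Fin v) ℝ) - τ ^ 2 • A
  have hM : M.IsSymm := isSymm_one.sub (hAsymm.smul _)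
  have hc : 0 ≤ lam * τ ^ 2 := by positivity
  calc √(∑ p, (F β₁ p - F β₂ p) ^ 2)
      ≤ √(∑ p, (M *ᵥ (β₁ - β₂)) p ^ 2) := by
        rw [hF, hF]
        refine Real.sqrt_le_sqrt ((sum_sq_softThresh_sub_le hc _ _).trans_eq ?_)
        simp [mulVec_sub]
    _ ≤ ξ * √(∑ p, (β₁ - β₂) p ^ 2) := M.sqrt_sum_sq_mulVec_le hM hξ0 heig _

/-- Theorem 1 (contraction part): the EM iteration map
`F(β) = S_{λτ²}((I − τ²A)β + τ²B)` is a `ξ`-contraction when every eigenvalue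
of `I − τ²A` has absolute value at most `ξ < 1`. -/
theorem slants_EM_contraction {N v : ℕ}
    (A : Matrix (Fin N × Fin v) (Fin N × Fin v) ℝ)
    (hAsymm : A.IsSymm) (hApsd : A.PosSemidef)
    (τ lam ξ : ℝ) (hτ : 0 < τ) (hlam : 0 < lam) (hξ0 : 0 ≤ ξ) (hξ1 : ξ < 1)
    (B : Fin N × Fin v → ℝ)
    (heig : ∀ (μ : ℝ) (x : Fin N × Fin v → ℝ), x ≠ 0 →
      ((1 : Matrix (Fin N × Fin v) (Fin N × Fin v) ℝ) - τ ^ 2 • A).mulVec x = μ • x →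
      |μ| ≤ ξ)
    (F : (Fin N × Fin v → ℝ) → (Fin N × Fin v → ℝ))
    (hF : ∀ β, F β = softThresh (lam * τ ^ 2)
      (((1 : Matrix (Fin N × Fin v) (Fin N × Fin v) ℝ) - τ ^ 2 • A).mulVec β + τ ^ 2 • B)) :
    ∀ β₁ β₂ : Fin N × Fin v → ℝ,
      Real.sqrt (∑ p, (F β₁ p - F β₂ p) ^ 2) ≤ ξ * Real.sqrt (∑ p, (β₁ p - β₂ p) ^ 2) :=
  slants_EM_contraction_general A hAsymm τ lam ξ hlam hξ0 B heig F hF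
end

section
/- Let Z be a real T×m matrix whose m columns are partitioned into N blocks of size v, let W be a T×T diagonal matrix with strictly positive diagonal entries, let Y ∈ ℝ^T, and let λ > 0, τ > 0. Set A = ZᵀWZ and B = ZᵀWY, and define the EM iteration map F(β) = S_{λτ²}((I − τ²A)β + τ²B), where S_{λτ²} is blockwise group soft-thresholding with threshold λτ². Then β* ∈ ℝ^m is a fixed point of F if and only if β* is a global minimizer of the penalized weighted least-squares objective G(β) = (1/2)(Y − Zβ)ᵀW(Y − Zβ) + λ·Σ_{d=1}^{N} ‖β_d‖₂, where β_d denotes the d-th block of β. -/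
open scoped BigOperators
open Matrix

/-!
Both sides are equivalent to the blockwise optimality condition `-g_d ∈ λ ∂‖·‖(β*_d)`, where
`g = Aβ* - B` is the gradient of the least-squares term at `β*`. For the EM map this is the
subgradient characterisation of soft-thresholding, `x = S_{λs}(x - s g) ↔ -g ∈ λ ∂‖·‖(x)`,
applied block by block. For the objective, the least-squares term expands exactly as
`f(β* + tδ) = f(β*) + t ⟨g, δ⟩ + t² q(δ)` with `q ≥ 0` and the penalty is convex, so `β*` is a
global minimiser iff it minimises the linearisation `⟨g, β - β*⟩ + λ Σ_d ‖β_d‖`; that problem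
separates over the blocks.
-/

open Set Filter Topology RealInnerProductSpace

section SoftThreshold

variable {E : Type*} [NormedAddCommGroup E] [InnerProductSpace ℝ E]

noncomputable def softThreshold (c : ℝ) (r : E) : E :=
  (if ‖r‖ ≤ c then 0 else 1 - c / ‖r‖) • r

/-- The left-hand side says that `-g` is a subgradient of `lam • ‖·‖` at `x`. -/
theorem forall_mul_norm_le_add_inner_iff {lam : ℝ} (hlam : 0 ≤ lam) {x g : E} :
    (∀ z, lam * ‖x‖ ≤ lam * ‖z‖ + ⟪g, z - x⟫) ↔
      (x = 0 ∧ ‖g‖ ≤ lam) ∨ (x ≠ 0 ∧ g = -(lam / ‖x‖) • x) := by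
  constructor
  · intro h
    have hg : ‖g‖ ≤ lam := by
      have h1 := h (x - g)
      have h2 := norm_sub_le x g
      rw [sub_sub_cancel_left, inner_neg_right, real_inner_self_eq_norm_sq] at h1
      nlinarith [norm_nonneg g]
    have hgx : ⟪g, x⟫ = -(lam * ‖x‖) := by
      have h0 := h 0
      have h2 := h ((2 : ℝ) • x)
      rw [zero_sub, inner_neg_right, norm_zero] at h0
      rw [norm_smul, Real.norm_two, two_smul, add_sub_cancel_right] at h2
      linarith
    by_cases hx : x = 0
    · exact Or.inl ⟨hx, hg⟩
    refine Or.inr ⟨hx, neg_smul (lam / ‖x‖) x ▸ eq_neg_of_add_eq_zero_left ?_⟩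
    have hxpos : 0 < ‖x‖ := norm_pos_iff.2 hx
    have hsq : ‖g + (lam / ‖x‖) • x‖ ^ 2 = ‖g‖ ^ 2 - lam ^ 2 := by
      rw [norm_add_sq_real, inner_smul_right, hgx, norm_smul, Real.norm_of_nonneg (by positivity)]
      field_simp
      ring
    rw [← norm_eq_zero, ← sq_eq_zero_iff]
    nlinarith [norm_nonneg g, sq_nonneg ‖g + (lam / ‖x‖) • x‖]
  · rintro (⟨rfl, hg⟩ | ⟨hx, rfl⟩) z
    · rw [sub_zero, norm_zero, mul_zero]
      nlinarith [neg_le_of_abs_le (abs_real_inner_le_norm g z), norm_nonneg z]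
    · have hxpos : 0 < ‖x‖ := norm_pos_iff.2 hx
      rw [inner_smul_left, inner_sub_right, real_inner_self_eq_norm_sq]
      have := real_inner_le_norm x z
      simp only [RCLike.conj_to_real]
      field_simp
      nlinarith

theorem softThreshold_sub_smul_eq_self_iff {lam s : ℝ} (hlam : 0 ≤ lam) (hs : 0 < s) {x g : E} :
    softThreshold (lam * s) (x - s • g) = x ↔ ∀ z, lam * ‖x‖ ≤ lam * ‖z‖ + ⟪g, z - x⟫ := by
  rw [forall_mul_norm_le_add_inner_iff hlam, softThreshold]
  obtain ⟨r, hr⟩ : ∃ r, r = x - s • g := ⟨_, rfl⟩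
  rw [← hr]
  constructor
  · intro h
    by_cases hrc : ‖r‖ ≤ lam * s
    · rw [if_pos hrc, zero_smul] at h
      rw [hr, ← h, zero_sub, norm_neg, norm_smul, Real.norm_of_nonneg hs.le] at hrc
      exact Or.inl ⟨h.symm, le_of_mul_le_mul_left (by linarith) hs⟩
    · rw [if_neg hrc] at h
      push Not at hrc
      have hrpos : 0 < ‖r‖ := by nlinarith
      have hnx : ‖x‖ = ‖r‖ - lam * s := by
        rw [← h, norm_smul, Real.norm_of_nonneg (by rw [sub_nonneg, div_le_one hrpos]; exact hrc.le)]
        field_simp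
      have hx : x ≠ 0 := by rw [← norm_pos_iff, hnx]; linarith
      refine Or.inr ⟨hx, smul_right_injective E hs.ne' ?_⟩
      have : ‖r‖ - lam * s ≠ 0 := by linarith
      change s • g = s • (-(lam / ‖x‖) • x)
      rw [show s • g = x - r by rw [hr]; abel, hnx, ← h]
      match_scalars
      field_simp
      ring
  · rintro (⟨rfl, hg⟩ | ⟨hx, rfl⟩)
    · rw [if_pos, zero_smul]
      rw [hr, zero_sub, norm_neg, norm_smul, Real.norm_of_nonneg hs.le]
      nlinarith [norm_nonneg g]
    · have hxpos : 0 < ‖x‖ := norm_pos_iff.2 hx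
      have hrx : r = (1 + lam * s / ‖x‖) • x := by
        rw [hr]; match_scalars; ring
      have hnr : ‖r‖ = ‖x‖ + lam * s := by
        rw [hrx, norm_smul, Real.norm_of_nonneg (by positivity)]
        field_simp
      rw [if_neg (by rw [hnr]; linarith), hnr, hrx, smul_smul]
      have : ‖x‖ + lam * s ≠ 0 := by positivity
      match_scalars
      field_simp
      ring

end SoftThreshold

theorem ConvexOn.finset_sum {𝕜 V β ι : Type*} [Semiring 𝕜] [PartialOrder 𝕜] [AddCommMonoid V]
    [SMul 𝕜 V] [AddCommMonoid β] [PartialOrder β] [IsOrderedAddMonoid β] [DistribMulAction 𝕜 β]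
    {s : Set V} (hs : Convex 𝕜 s) (t : Finset ι) {f : ι → V → β}
    (hf : ∀ i ∈ t, ConvexOn 𝕜 s (f i)) : ConvexOn 𝕜 s fun x => ∑ i ∈ t, f i x := by
  refine ⟨hs, fun x hx y hy a b ha hb hab => ?_⟩
  simp only [Finset.smul_sum, ← Finset.sum_add_distrib]
  exact Finset.sum_le_sum fun i hi => (hf i hi).2 hx hy ha hb hab

theorem nonneg_of_forall_Ioc_nonneg_add_mul {a b : ℝ} (h : ∀ t ∈ Ioc (0 : ℝ) 1, 0 ≤ a + t * b) :
    0 ≤ a := by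
  have hlim : Tendsto (fun t : ℝ => a + t * b) (𝓝[>] 0) (𝓝 a) :=
    ((by fun_prop : Continuous fun t : ℝ => a + t * b).tendsto' 0 a (by simp)).mono_left
      nhdsWithin_le_nhds
  exact ge_of_tendsto hlim (eventually_of_mem (Ioc_mem_nhdsGT one_pos) h)

theorem forall_add_le_add_iff_of_quadratic_expansion {V : Type*} [AddCommGroup V] [Module ℝ V]
    {f P ℓ q : V → ℝ} {x : V} (hP : ConvexOn ℝ univ P) (hq : ∀ δ, 0 ≤ q δ)
    (hf : ∀ δ (t : ℝ), f (x + t • δ) = f x + t * ℓ δ + t ^ 2 * q δ) :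
    (∀ y, f x + P x ≤ f y + P y) ↔ ∀ y, P x ≤ P y + ℓ (y - x) := by
  constructor
  · intro h y
    suffices 0 ≤ ℓ (y - x) + (P y - P x) by linarith
    refine nonneg_of_forall_Ioc_nonneg_add_mul (b := q (y - x)) fun t ⟨ht0, ht1⟩ => ?_
    have hseg : x + t • (y - x) = (1 - t) • x + t • y := by module
    have hconv := hP.2 (mem_univ x) (mem_univ y) (by linarith : 0 ≤ 1 - t) ht0.le (by ring)
    have hmin := h (x + t • (y - x))
    rw [hf, hseg] at hmin
    rw [smul_eq_mul, smul_eq_mul] at hconv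
    nlinarith
  · intro h y
    have := hf (y - x) 1
    rw [one_smul, add_sub_cancel, one_mul, one_pow, one_mul] at this
    linarith [h y, hq (y - x)]

theorem forall_sum_le_sum_iff {ι M : Type*} [Fintype ι] [DecidableEq ι] [AddCommMonoid M]
    [PartialOrder M] [IsOrderedCancelAddMonoid M] {E : ι → Type*} (φ : ∀ i, E i → M)
    (x : ∀ i, E i) :
    (∀ y : ∀ i, E i, ∑ i, φ i (x i) ≤ ∑ i, φ i (y i)) ↔ ∀ i z, φ i (x i) ≤ φ i z := by
  refine ⟨fun h i z => ?_, fun h y => Finset.sum_le_sum fun i _ => h i (y i)⟩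
  have hupd := h (Function.update x i z)
  simp_rw [Function.apply_update φ x i z] at hupd
  rw [Finset.sum_update_of_mem (Finset.mem_univ i),
    Finset.sum_eq_add_sum_sdiff_singleton_of_mem (Finset.mem_univ i)] at hupd
  exact le_of_add_le_add_right hupd

theorem sum_mul_sub_mulVec_add_smul_sq {ι κ : Type*} [Fintype ι] [DecidableEq ι] [Fintype κ]
    (Z : Matrix ι κ ℝ) (w Y : ι → ℝ) (β δ : κ → ℝ) (t : ℝ) :
    ∑ i, w i * (Y i - (Z *ᵥ (β + t • δ)) i) ^ 2 =
      ∑ i, w i * (Y i - (Z *ᵥ β) i) ^ 2 + t * (2 * ((Zᵀ * diagonal w) *ᵥ (Z *ᵥ β - Y)) ⬝ᵥ δ)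
        + t ^ 2 * ∑ i, w i * (Z *ᵥ δ) i ^ 2 := by
  have hcross : ((Zᵀ * diagonal w) *ᵥ (Z *ᵥ β - Y)) ⬝ᵥ δ
      = ∑ i, w i * ((Z *ᵥ β) i - Y i) * (Z *ᵥ δ) i := by
    rw [dotProduct_comm, ← mulVec_mulVec, dotProduct_mulVec, vecMul_transpose, dotProduct_comm]
    simp [dotProduct, mulVec_diagonal]
  rw [hcross, mulVec_add, mulVec_smul, Finset.mul_sum, Finset.mul_sum, Finset.mul_sum,
    ← Finset.sum_add_distrib, ← Finset.sum_add_distrib]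
  refine Finset.sum_congr rfl fun i _ => ?_
  simp only [Pi.add_apply, Pi.smul_apply, smul_eq_mul]
  ring

section Blocks

variable {N v : ℕ}

def blockEquiv (N v : ℕ) : (Fin N × Fin v → ℝ) ≃ₗ[ℝ] (Fin N → EuclideanSpace ℝ (Fin v)) :=
  (LinearEquiv.curry ℝ ℝ (Fin N) (Fin v)).trans
    (LinearEquiv.piCongrRight fun _ => (WithLp.linearEquiv 2 ℝ (Fin v → ℝ)).symm)

@[simp]
theorem blockEquiv_apply (β : Fin N × Fin v → ℝ) (d : Fin N) (j : Fin v) :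
    blockEquiv N v β d j = β (d, j) := rfl

theorem norm_blockEquiv (β : Fin N × Fin v → ℝ) (d : Fin N) :
    ‖blockEquiv N v β d‖ = blockNorm β d := by
  simp [EuclideanSpace.norm_eq, blockNorm]

theorem dotProduct_eq_sum_inner_blockEquiv (a b : Fin N × Fin v → ℝ) :
    a ⬝ᵥ b = ∑ d, ⟪blockEquiv N v a d, blockEquiv N v b d⟫ := by
  simp [dotProduct, Fintype.sum_prod_type, PiLp.inner_apply, mul_comm]

theorem blockEquiv_softThresh (c : ℝ) (r : Fin N × Fin v → ℝ) (d : Fin N) :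
    blockEquiv N v (softThresh c r) d = softThreshold c (blockEquiv N v r d) := by
  ext j
  rw [softThreshold, norm_blockEquiv]
  rfl


theorem convexOn_mul_sum_blockNorm {lam : ℝ} (hlam : 0 ≤ lam) :
    ConvexOn ℝ univ fun β : Fin N × Fin v → ℝ => lam * ∑ d, blockNorm β d := by
  have hblock (d : Fin N) : ConvexOn ℝ univ fun β : Fin N × Fin v → ℝ => blockNorm β d := by
    simpa [Function.comp_def, norm_blockEquiv] using (convexOn_norm convex_univ).comp_linearMap
      ((LinearMap.proj d).comp (blockEquiv N v).toLinearMap)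
  exact (ConvexOn.finset_sum convex_univ Finset.univ fun d _ => hblock d).smul hlam

theorem forall_mul_sum_blockNorm_le_iff (lam : ℝ) (x g : Fin N × Fin v → ℝ) :
    (∀ β, lam * ∑ d, blockNorm x d ≤ lam * ∑ d, blockNorm β d + g ⬝ᵥ (β - x)) ↔
      ∀ d z, lam * ‖blockEquiv N v x d‖
        ≤ lam * ‖z‖ + ⟪blockEquiv N v g d, z - blockEquiv N v x d⟫ := by
  have hsplit (β : Fin N × Fin v → ℝ) : lam * ∑ d, blockNorm β d + g ⬝ᵥ (β - x) =
      ∑ d, (lam * ‖blockEquiv N v β d‖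
        + ⟪blockEquiv N v g d, blockEquiv N v β d - blockEquiv N v x d⟫) := by
    simp only [dotProduct_eq_sum_inner_blockEquiv, map_sub, Pi.sub_apply, norm_blockEquiv,
      Finset.mul_sum, Finset.sum_add_distrib]
  have hsep := forall_sum_le_sum_iff
    (fun d z => lam * ‖z‖ + ⟪blockEquiv N v g d, z - blockEquiv N v x d⟫) (blockEquiv N v x)
  simp only [sub_self, inner_zero_right, add_zero] at hsep
  rw [← hsep]
  refine (blockEquiv N v).toEquiv.forall_congr fun β => ?_
  rw [LinearEquiv.coe_toEquiv, ← hsplit β]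
  simp only [norm_blockEquiv, Finset.mul_sum]

end Blocks

/-- Fixed points of the SLANTS EM iteration `F(β) = S_{λτ²}((I − τ²A)β + τ²B)`,
with `A = ZᵀWZ` and `B = ZᵀWY`, are exactly the global minimizers of the
group-LASSO objective `G(β) = ½(Y−Zβ)ᵀW(Y−Zβ) + λ Σ_d ‖β_d‖₂`. -/
theorem slants_EM_fixed_point_iff_group_lasso_minimizer {T N v : ℕ}
    (Z : Matrix (Fin T) (Fin N × Fin v) ℝ)
    (w : Fin T → ℝ) (hw : ∀ t, 0 < w t)
    (Y : Fin T → ℝ) (lam τ : ℝ) (hlam : 0 < lam) (hτ : 0 < τ)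
    (A : Matrix (Fin N × Fin v) (Fin N × Fin v) ℝ)
    (hA : A = Zᵀ * Matrix.diagonal w * Z)
    (B : Fin N × Fin v → ℝ)
    (hB : B = (Zᵀ * Matrix.diagonal w).mulVec Y)
    (F : (Fin N × Fin v → ℝ) → (Fin N × Fin v → ℝ))
    (hF : ∀ β, F β = softThresh (lam * τ ^ 2)
      (((1 : Matrix (Fin N × Fin v) (Fin N × Fin v) ℝ) - τ ^ 2 • A).mulVec β + τ ^ 2 • B))
    (G : (Fin N × Fin v → ℝ) → ℝ)
    (hG : ∀ β, G β = (1 / 2) * (∑ t, w t * (Y t - Z.mulVec β t) ^ 2)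
      + lam * ∑ d, blockNorm β d) :
    ∀ βstar : Fin N × Fin v → ℝ,
      F βstar = βstar ↔ (∀ β : Fin N × Fin v → ℝ, G βstar ≤ G β) := by
  intro βstar
  set e := blockEquiv N v
  set g := A *ᵥ βstar - B with hg
  have hgrad : g = (Zᵀ * diagonal w) *ᵥ (Z *ᵥ βstar - Y) := by
    rw [hg, hA, hB, mulVec_sub, mulVec_mulVec]
  have hEM : F βstar = softThresh (lam * τ ^ 2) (βstar - τ ^ 2 • g) := by
    rw [hF, hg, sub_mulVec, one_mulVec, smul_mulVec, smul_sub]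
    abel_nf
  have hexp (δ : Fin N × Fin v → ℝ) (t : ℝ) :
      (1 / 2) * ∑ i, w i * (Y i - (Z *ᵥ (βstar + t • δ)) i) ^ 2 =
        (1 / 2) * ∑ i, w i * (Y i - (Z *ᵥ βstar) i) ^ 2 + t * g ⬝ᵥ δ
          + t ^ 2 * ((1 / 2) * ∑ i, w i * (Z *ᵥ δ) i ^ 2) := by
    rw [sum_mul_sub_mulVec_add_smul_sq, hgrad]
    ring
  have hq (δ : Fin N × Fin v → ℝ) : 0 ≤ (1 / 2) * ∑ i, w i * (Z *ᵥ δ) i ^ 2 :=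
    mul_nonneg (by norm_num) (Finset.sum_nonneg fun i _ => mul_nonneg (hw i).le (sq_nonneg _))
  calc F βstar = βstar
        ↔ ∀ d, softThreshold (lam * τ ^ 2) (e βstar d - τ ^ 2 • e g d) = e βstar d := by
        rw [hEM, ← e.injective.eq_iff, funext_iff]
        simp only [blockEquiv_softThresh, map_sub, map_smul, Pi.sub_apply, Pi.smul_apply, e]
    _ ↔ ∀ d z, lam * ‖e βstar d‖ ≤ lam * ‖z‖ + ⟪e g d, z - e βstar d⟫ :=
        forall_congr' fun d => softThreshold_sub_smul_eq_self_iff hlam.le (by positivity)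
    _ ↔ ∀ β, lam * ∑ d, blockNorm βstar d ≤ lam * ∑ d, blockNorm β d + g ⬝ᵥ (β - βstar) :=
        (forall_mul_sum_blockNorm_le_iff lam βstar g).symm
    _ ↔ ∀ β, G βstar ≤ G β := by
        simp only [hG]
        exact (forall_add_le_add_iff_of_quadratic_expansion
          (f := fun β => (1 / 2) * ∑ i, w i * (Y i - (Z *ᵥ β) i) ^ 2)
          (convexOn_mul_sum_blockNorm hlam.le) hq hexp).symm
end

section
/- Let E be a real inner product space, let τ ≥ 0, and let x, y ∈ E satisfy ‖x‖ ≥ τ and ‖y‖ ≥ τ with x ≠ 0 and y ≠ 0. Then ‖(1 − τ/‖x‖)·x − (1 − τ/‖y‖)·y‖ ≤ ‖x − y‖. -/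
/-!
Write `u = x / ‖x‖` and `v = y / ‖y‖`, so that the soft-thresholded vectors are `x - τ u` and
`y - τ v`. Then `‖(x - y) - τ (u - v)‖ ≤ ‖x - y‖` amounts to `τ ‖u - v‖² ≤ 2 ⟪x - y, u - v⟫`, and
for unit vectors `u`, `v` one has `2 ⟪‖x‖ u - ‖y‖ v, u - v⟫ = (‖x‖ + ‖y‖) ‖u - v‖²`; so it suffices
that `τ ≤ ‖x‖ + ‖y‖`.
-/

open NormedSpace RealInnerProductSpace

section

variable {E : Type*} [NormedAddCommGroup E] [InnerProductSpace ℝ E]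

theorem norm_sub_smul_le_norm {w d : E} {τ : ℝ} (hτ : 0 ≤ τ)
    (h : τ * ‖d‖ ^ 2 ≤ 2 * ⟪w, d⟫) : ‖w - τ • d‖ ≤ ‖w‖ := by
  refine (sq_le_sq₀ (norm_nonneg _) (norm_nonneg _)).mp ?_
  rw [norm_sub_sq_real, norm_smul, real_inner_smul_right, Real.norm_of_nonneg hτ]
  nlinarith [mul_le_mul_of_nonneg_left h hτ]

theorem real_inner_smul_sub_smul_sub_of_norm_eq_one {u v : E} (hu : ‖u‖ = 1) (hv : ‖v‖ = 1)
    (a b : ℝ) : 2 * ⟪a • u - b • v, u - v⟫ = (a + b) * ‖u - v‖ ^ 2 := by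
  rw [norm_sub_sq_real, inner_sub_left, inner_sub_right, inner_sub_right, real_inner_smul_left,
    real_inner_smul_left, real_inner_smul_left, real_inner_smul_left, real_inner_self_eq_norm_sq,
    real_inner_self_eq_norm_sq, real_inner_comm v u, hu, hv]
  ring

theorem one_sub_div_norm_smul_eq_sub_smul_normalize (τ : ℝ) (x : E) :
    (1 - τ / ‖x‖) • x = x - τ • normalize x := by
  rw [sub_smul, one_smul, NormedSpace.normalize, smul_smul, div_eq_mul_inv]

end

theorem soft_threshold_nonexpansive_outside_ball_general {E : Type*} [NormedAddCommGroup E]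
    [InnerProductSpace ℝ E] (τ : ℝ) (hτ : 0 ≤ τ) (x y : E)
    (hx : τ ≤ ‖x‖) (hx0 : x ≠ 0) (hy0 : y ≠ 0) :
    ‖(1 - τ / ‖x‖) • x - (1 - τ / ‖y‖) • y‖ ≤ ‖x - y‖ := by
  rw [one_sub_div_norm_smul_eq_sub_smul_normalize, one_sub_div_norm_smul_eq_sub_smul_normalize,
    show x - τ • normalize x - (y - τ • normalize y) = x - y - τ • (normalize x - normalize y) by
      module]
  apply norm_sub_smul_le_norm hτ
  have hsum : τ ≤ ‖x‖ + ‖y‖ := hx.trans (le_add_of_nonneg_right (norm_nonneg y))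
  calc τ * ‖normalize x - normalize y‖ ^ 2
      ≤ (‖x‖ + ‖y‖) * ‖normalize x - normalize y‖ ^ 2 := by gcongr
    _ = 2 * ⟪‖x‖ • normalize x - ‖y‖ • normalize y, normalize x - normalize y⟫ :=
      (real_inner_smul_sub_smul_sub_of_norm_eq_one (norm_normalize hx0)
        (norm_normalize hy0) _ _).symm
    _ = 2 * ⟪x - y, normalize x - normalize y⟫ := by
      rw [norm_smul_normalize, norm_smul_normalize]

/-- Case 3 of Theorem 1: soft-thresholding is nonexpansive on vectors whose norms
both exceed the threshold `τ`. -/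
theorem soft_threshold_nonexpansive_outside_ball {E : Type*} [NormedAddCommGroup E]
    [InnerProductSpace ℝ E] (τ : ℝ) (hτ : 0 ≤ τ) (x y : E)
    (hx : τ ≤ ‖x‖) (hy : τ ≤ ‖y‖) (hx0 : x ≠ 0) (hy0 : y ≠ 0) :
    ‖(1 - τ / ‖x‖) • x - (1 - τ / ‖y‖) • y‖ ≤ ‖x - y‖ :=
  soft_threshold_nonexpansive_outside_ball_general τ hτ x y hx hx0 hy0
end

section
/- Let Z be a real T×m matrix whose m columns are partitioned into N blocks, let Y ∈ ℝ^T, λ̃ ≥ 0, and κ > 0 with T ≥ 1, and suppose the restricted eigenvalue condition ZᵀZ ⪰ κT·I_m holds (i.e., ‖Zu‖₂² ≥ κT‖u‖₂² for all u ∈ ℝ^m). Let β ∈ ℝ^m have block support contained in S₀ ⊆ {1,…,N}, i.e., β_d = 0 for d ∉ S₀, and suppose β̂ ∈ ℝ^m satisfies ‖Y − Zβ̂‖₂² + λ̃·Σ_{d=1}^{N}‖β̂_d‖₂ ≤ ‖Y − Zβ‖₂² + λ̃·Σ_{d=1}^{N}‖β_d‖₂. Then ‖β − β̂‖₂² ≤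 8(κT)⁻¹·‖Y − Zβ‖₂² + 4(κT)⁻²·λ̃²·|S₀|. -/
/-!
Put `u = β - β̂` and `a = κT`. Comparing the two objective values, the excess fit
`‖Y - Zβ̂‖² - ‖Y - Zβ‖²` is at most `λ̃` times the penalty gap, which, since `β` lives on the
blocks of `S₀`, is at most `∑_{d ∈ S₀} ‖u_d‖ ≤ √|S₀| ‖u‖` (Cauchy–Schwarz). Together with
`‖Zu‖² ≤ 2‖Y - Zβ̂‖² + 2‖Y - Zβ‖²` and the restricted eigenvalue condition this gives the
quadratic inequality `a‖u‖² ≤ 4‖Y - Zβ‖² + 2λ̃√|S₀| ‖u‖`, which is solved for `‖u‖²`.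
-/

open scoped BigOperators
open Matrix

section BlockNorm

variable {N v : ℕ}

lemma blockNorm_eq_norm_toLp (r : Fin N × Fin v → ℝ) (d : Fin N) :
    blockNorm r d = ‖WithLp.toLp 2 fun j => r (d, j)‖ := by
  simp [blockNorm, EuclideanSpace.norm_eq]

lemma blockNorm_sub_blockNorm_le (x y : Fin N × Fin v → ℝ) (d : Fin N) :
    blockNorm x d - blockNorm y d ≤ blockNorm (x - y) d := by
  rw [blockNorm_eq_norm_toLp, blockNorm_eq_norm_toLp, blockNorm_eq_norm_toLp]
  exact norm_sub_norm_le _ _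

lemma sum_blockNorm_sq (r : Fin N × Fin v → ℝ) :
    ∑ d, blockNorm r d ^ 2 = ∑ p, r p ^ 2 := by
  simp only [blockNorm, Real.sq_sqrt (Finset.sum_nonneg fun _ _ => sq_nonneg _),
    Fintype.sum_prod_type]

lemma sum_blockNorm_le_sqrt_card_mul_sqrt (S : Finset (Fin N)) (r : Fin N × Fin v → ℝ) :
    ∑ d ∈ S, blockNorm r d ≤ √(S.card : ℝ) * √(∑ p, r p ^ 2) := by
  calc ∑ d ∈ S, blockNorm r d = ∑ d ∈ S, 1 * blockNorm r d := by simp only [one_mul]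
    _ ≤ √(∑ d ∈ S, (1 : ℝ) ^ 2) * √(∑ d ∈ S, blockNorm r d ^ 2) :=
      Real.sum_mul_le_sqrt_mul_sqrt _ _ _
    _ ≤ √(S.card : ℝ) * √(∑ p, r p ^ 2) := by
      rw [one_pow, Finset.sum_const, nsmul_one, ← sum_blockNorm_sq]
      gcongr
      exact S.subset_univ

lemma sum_blockNorm_sub_sum_blockNorm_le (S : Finset (Fin N)) {x : Fin N × Fin v → ℝ}
    (hx : ∀ d ∉ S, ∀ j, x (d, j) = 0) (y : Fin N × Fin v → ℝ) :
    ∑ d, blockNorm x d - ∑ d, blockNorm y d ≤ ∑ d ∈ S, blockNorm (x - y) d := by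
  have hx_sum : ∑ d, blockNorm x d = ∑ d ∈ S, blockNorm x d :=
    (Finset.sum_subset S.subset_univ fun d _ hd => by simp [blockNorm, hx d hd]).symm
  have hy_sum : ∑ d ∈ S, blockNorm y d ≤ ∑ d, blockNorm y d :=
    Finset.sum_le_sum_of_subset_of_nonneg S.subset_univ fun _ _ _ => Real.sqrt_nonneg _
  calc ∑ d, blockNorm x d - ∑ d, blockNorm y d
      ≤ ∑ d ∈ S, (blockNorm x d - blockNorm y d) := by
        rw [Finset.sum_sub_distrib, hx_sum]; linarith
    _ ≤ ∑ d ∈ S, blockNorm (x - y) d :=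
      Finset.sum_le_sum fun d _ => blockNorm_sub_blockNorm_le x y d

end BlockNorm

lemma sum_sq_mulVec_sub_le {m n : Type*} [Fintype m] [Fintype n]
    (Z : Matrix m n ℝ) (Y : m → ℝ) (x y : n → ℝ) :
    ∑ t, (Z *ᵥ (x - y)) t ^ 2
      ≤ 2 * ∑ t, (Y t - (Z *ᵥ y) t) ^ 2 + 2 * ∑ t, (Y t - (Z *ᵥ x) t) ^ 2 := by
  rw [Finset.mul_sum, Finset.mul_sum, ← Finset.sum_add_distrib]
  refine Finset.sum_le_sum fun t _ => ?_
  rw [mulVec_sub, Pi.sub_apply]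
  nlinarith [sq_nonneg ((Y t - (Z *ᵥ y) t) + (Y t - (Z *ᵥ x) t))]

/-- Completing the square: `2abw ≤ (aw)² + b²`. -/
lemma sq_mul_le_of_mul_sq_le_add_mul {a b c w : ℝ} (ha : 0 ≤ a) (h : a * w ^ 2 ≤ c + b * w) :
    (a * w) ^ 2 ≤ 2 * a * c + b ^ 2 := by
  nlinarith [mul_le_mul_of_nonneg_left h ha, sq_nonneg (a * w - b)]

/-- Deterministic core estimate (eq. (21) of the paper): under the restricted eigenvalue
condition `‖Zu‖₂² ≥ κT‖u‖₂²`, if the group-LASSO estimator `β̂` fits at least as well as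
the oracle `β` (supported on `S₀`), then
`‖β − β̂‖₂² ≤ 8(κT)⁻¹‖Y − Zβ‖₂² + 4(κT)⁻²λ̃²|S₀|`. -/
theorem group_lasso_error_bound {T N v : ℕ} (hT : 1 ≤ T)
    (Z : Matrix (Fin T) (Fin N × Fin v) ℝ) (Y : Fin T → ℝ)
    (lam κ : ℝ) (hlam : 0 ≤ lam) (hκ : 0 < κ)
    (hRE : ∀ u : Fin N × Fin v → ℝ,
      κ * (T : ℝ) * (∑ p, u p ^ 2) ≤ ∑ t, (Z.mulVec u t) ^ 2)
    (S₀ : Finset (Fin N)) (β βhat : Fin N × Fin v → ℝ)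
    (hsupp : ∀ d ∉ S₀, ∀ j, β (d, j) = 0)
    (hopt : (∑ t, (Y t - Z.mulVec βhat t) ^ 2) + lam * ∑ d, blockNorm βhat d
      ≤ (∑ t, (Y t - Z.mulVec β t) ^ 2) + lam * ∑ d, blockNorm β d) :
    (∑ p, (β p - βhat p) ^ 2)
      ≤ 8 * (κ * (T : ℝ))⁻¹ * (∑ t, (Y t - Z.mulVec β t) ^ 2)
        + 4 * (κ * (T : ℝ))⁻¹ ^ 2 * lam ^ 2 * (S₀.card : ℝ) := by
  set a := κ * (T : ℝ)
  have ha : 0 < a := mul_pos hκ (by exact_mod_cast hT)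
  set w := √(∑ p, (β - βhat) p ^ 2)
  have hw : w ^ 2 = ∑ p, (β p - βhat p) ^ 2 :=
    Real.sq_sqrt (Finset.sum_nonneg fun _ _ => sq_nonneg _)
  have hpenalty : ∑ d, blockNorm β d - ∑ d, blockNorm βhat d ≤ √(S₀.card : ℝ) * w :=
    (sum_blockNorm_sub_sum_blockNorm_le S₀ hsupp βhat).trans
      (sum_blockNorm_le_sqrt_card_mul_sqrt S₀ _)
  have hquad : a * w ^ 2 ≤ 4 * ∑ t, (Y t - Z.mulVec β t) ^ 2
      + 2 * lam * √(S₀.card : ℝ) * w := by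
    have hfit := sum_sq_mulVec_sub_le Z Y β βhat
    have hRE' := hRE (β - βhat)
    have := mul_le_mul_of_nonneg_left hpenalty hlam
    rw [hw]
    simp only [Pi.sub_apply] at hRE' hfit
    linarith
  have hsolved := sq_mul_le_of_mul_sq_le_add_mul (b := 2 * lam * √(S₀.card : ℝ)) ha.le hquad
  rw [← hw]
  calc w ^ 2 = a⁻¹ ^ 2 * (a * w) ^ 2 := by field_simp
    _ ≤ a⁻¹ ^ 2 * (2 * a * (4 * ∑ t, (Y t - Z.mulVec β t) ^ 2)
          + (2 * lam * √(S₀.card : ℝ)) ^ 2) := by gcongr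
    _ = _ := by
      rw [mul_pow, mul_pow, Real.sq_sqrt (Nat.cast_nonneg _)]
      field_simp
      ring
end
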